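/- b₁ of the Hilbert scheme: for n ≥ 1 the coefficient of t¹q^n in Göttsche's product equals b1, i.e. b₁(X^[n]) = b₁(X) for all n ≥ 1. -/

import Mathlib

open PowerSeries Polynomial Finset

/-- The variable `t` viewed as a constant of the power-series ring `(ℤ[t])[[q]]`. -/
noncomputable def Tvar : PowerSeries (Polynomial ℤ) := PowerSeries.C (R := Polynomial ℤ) Polynomial.X

/-- The `m`-th factor of Göttsche's product. -/
noncomputable def gottscheFactor (b1 b2 m : ℕ) : PowerSeries (Polynomial ℤ) :=
  ((1 + Tvar ^ (2*m-1) * PowerSeries.X ^ m) * (1 + Tvar ^ (2*m+1) * PowerSeries.X ^ m)) ^ b1 *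
  PowerSeries.invOfUnit
    ((1 - Tvar ^ (2*m-2) * PowerSeries.X ^ m) * (1 - Tvar ^ (2*m+2) * PowerSeries.X ^ m) *
      (1 - Tvar ^ (2*m) * PowerSeries.X ^ m) ^ b2) 1

/-- The coefficient of `q^n` in Göttsche's product (only factors with `m ≤ n` contribute). -/
noncomputable def gottscheCoeff (b1 b2 n : ℕ) : Polynomial ℤ :=
  PowerSeries.coeff (R := Polynomial ℤ) n (∏ m ∈ Finset.Icc 1 n, gottscheFactor b1 b2 m)

/-!
Substitute `t ↦ ε` with `ε² = 0`: this loses nothing about the coefficients of `t⁰` and `t¹`.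
Every factor with `m ≥ 2` has only `t`-exponents `≥ 2` next to its powers of `q`, so it becomes `1`.
The factor `m = 1` becomes `(1 + εq)^b1 / (1 - q) = (1 + b1 ε q)(1 + q + q² + ⋯)`, whose
`q^n`-coefficient for `n ≥ 1` is `1 + b1 ε`.
-/

open scoped DualNumber

namespace DualNumber

variable {R : Type*}

theorem eps_pow_eq_zero [Semiring R] {k : ℕ} (hk : 2 ≤ k) : (ε : R[ε]) ^ k = 0 := by
  obtain ⟨j, rfl⟩ := Nat.exists_eq_add_of_le hk
  rw [pow_add, eps_pow_two, zero_mul]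

theorem snd_aeval_eps [CommSemiring R] (p : R[X]) : (aeval (ε : R[ε]) p).snd = p.coeff 1 := by
  induction p using Polynomial.induction_on' with
  | add p q hp hq => simp [hp, hq]
  | monomial k a =>
    rw [aeval_monomial, Polynomial.coeff_monomial]
    rcases k with _ | _ | k <;> simp [TrivSqZeroExt.algebraMap_eq_inl, eps_pow_eq_zero]

end DualNumber

theorem one_add_pow_of_mul_self_eq_zero {R : Type*} [Semiring R] {a : R} (ha : a * a = 0)
    (k : ℕ) : (1 + a) ^ k = 1 + k • a := by
  induction k with
  | zero => simp
  | succ k ih =>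
    rw [pow_succ, ih, add_mul, one_mul, mul_add, mul_one, smul_mul_assoc, ha, smul_zero,
      add_zero, succ_nsmul, add_assoc, add_comm a]

theorem PowerSeries.map_invOfUnit_eq_of_mul_eq_one {R S F : Type*} [Ring R] [Monoid S]
    [FunLike F R⟦X⟧ S] [MonoidHomClass F R⟦X⟧ S] (f : F) {φ : R⟦X⟧} (hφ : constantCoeff φ = 1)
    {s : S} (h : f φ * s = 1) : f (invOfUnit φ 1) = s := by
  refine left_inv_eq_right_inv ?_ h
  rw [← map_mul, invOfUnit_mul φ 1 (by simpa using hφ), map_one]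

noncomputable def reduceModTSq : (ℤ[X])⟦X⟧ →+* (ℤ[ε])⟦X⟧ :=
  PowerSeries.map (aeval (ε : ℤ[ε])).toRingHom

theorem coeff_reduceModTSq (n : ℕ) (φ : (ℤ[X])⟦X⟧) :
    PowerSeries.coeff n (reduceModTSq φ) = Polynomial.aeval ε (PowerSeries.coeff n φ) :=
  PowerSeries.coeff_map _ n φ

theorem reduceModTSq_X : reduceModTSq PowerSeries.X = PowerSeries.X :=
  map_X _

theorem reduceModTSq_Tvar : reduceModTSq Tvar = PowerSeries.C ε := by
  simp [reduceModTSq, Tvar]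

theorem reduceModTSq_Tvar_pow (a : ℕ) : reduceModTSq (Tvar ^ a) = PowerSeries.C (ε ^ a) := by
  rw [map_pow, reduceModTSq_Tvar, map_pow]

noncomputable def gottscheDenom (b2 m : ℕ) : (ℤ[X])⟦X⟧ :=
  (1 - Tvar ^ (2*m-2) * PowerSeries.X ^ m) * (1 - Tvar ^ (2*m+2) * PowerSeries.X ^ m) *
    (1 - Tvar ^ (2*m) * PowerSeries.X ^ m) ^ b2

theorem gottscheFactor_eq (b1 b2 m : ℕ) :
    gottscheFactor b1 b2 m =
      ((1 + Tvar ^ (2*m-1) * PowerSeries.X ^ m) * (1 + Tvar ^ (2*m+1) * PowerSeries.X ^ m)) ^ b1 *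
        invOfUnit (gottscheDenom b2 m) 1 :=
  rfl

theorem constantCoeff_gottscheDenom (b2 : ℕ) {m : ℕ} (hm : 1 ≤ m) :
    PowerSeries.constantCoeff (gottscheDenom b2 m) = 1 := by
  simp [gottscheDenom, zero_pow (by omega : m ≠ 0)]

theorem reduceModTSq_gottscheFactor_of_two_le (b1 b2 : ℕ) {m : ℕ} (hm : 2 ≤ m) :
    reduceModTSq (gottscheFactor b1 b2 m) = 1 := by
  have hden : reduceModTSq (gottscheDenom b2 m) = 1 := by
    simp (disch := omega) [gottscheDenom, reduceModTSq_Tvar_pow, DualNumber.eps_pow_eq_zero]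
  rw [gottscheFactor_eq, map_mul, PowerSeries.map_invOfUnit_eq_of_mul_eq_one _
    (constantCoeff_gottscheDenom b2 (by omega)) (by rw [hden, one_mul])]
  simp (disch := omega) [reduceModTSq_Tvar_pow, DualNumber.eps_pow_eq_zero]

theorem reduceModTSq_gottscheFactor_one (b1 b2 : ℕ) :
    reduceModTSq (gottscheFactor b1 b2 1) =
      (1 + PowerSeries.C ε * PowerSeries.X) ^ b1 * PowerSeries.mk 1 := by
  have hden : reduceModTSq (gottscheDenom b2 1) = 1 - PowerSeries.X := by
    simp (disch := omega) [gottscheDenom, reduceModTSq_Tvar_pow, DualNumber.eps_pow_eq_zero,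
      reduceModTSq_X]
  rw [gottscheFactor_eq, map_mul, PowerSeries.map_invOfUnit_eq_of_mul_eq_one _
    (constantCoeff_gottscheDenom b2 le_rfl) (by rw [hden, mul_comm, mk_one_mul_one_sub_eq_one])]
  simp (disch := omega) [reduceModTSq_Tvar_pow, DualNumber.eps_pow_eq_zero, reduceModTSq_X,
    reduceModTSq_Tvar]

theorem snd_coeff_one_add_C_eps_mul_X_pow_mul_mk_one {R : Type*} [CommSemiring R] (k : ℕ)
    {n : ℕ} (hn : 1 ≤ n) :
    (PowerSeries.coeff n ((1 + PowerSeries.C (ε : R[ε]) * PowerSeries.X) ^ k *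
      PowerSeries.mk 1)).snd = (k : R) := by
  have hsq : (PowerSeries.C (ε : R[ε]) * PowerSeries.X) * (PowerSeries.C ε * PowerSeries.X) = 0 := by
    rw [mul_mul_mul_comm, ← map_mul, DualNumber.eps_mul_eps, map_zero, zero_mul]
  obtain ⟨j, rfl⟩ := Nat.exists_eq_add_of_le' hn
  rw [one_add_pow_of_mul_self_eq_zero hsq, add_mul, one_mul, map_add, smul_mul_assoc, map_nsmul,
    mul_assoc, PowerSeries.coeff_C_mul, PowerSeries.coeff_succ_X_mul]
  simp

/-- `b₁` of the Hilbert scheme: for `n ≥ 1` the coefficient of `t¹ q^n` in Göttsche's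
product equals `b1`, i.e. `b₁(X^[n]) = b₁(X)`. -/
theorem gottsche_b1 (b1 b2 n : ℕ) (hn : 1 ≤ n) :
    (gottscheCoeff b1 b2 n).coeff 1 = (b1 : ℤ) := by
  have hprod : reduceModTSq (∏ m ∈ Icc 1 n, gottscheFactor b1 b2 m) =
      (1 + PowerSeries.C ε * PowerSeries.X) ^ b1 * PowerSeries.mk 1 := by
    rw [map_prod, prod_eq_single_of_mem 1 (by simp [hn]) fun m hm hm1 =>
      reduceModTSq_gottscheFactor_of_two_le b1 b2 (by simp at hm; omega)]
    exact reduceModTSq_gottscheFactor_one b1 b2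
  rw [← DualNumber.snd_aeval_eps, gottscheCoeff, ← coeff_reduceModTSq, hprod]
  exact snd_coeff_one_add_C_eps_mul_X_pow_mul_mk_one b1 hn
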